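/- For every y > 0 and every real a with |a| < π/2, (2/π)·∫₀^∞ ν·sin(aν)·K_{iν}(y) dν = y·e^{−y·cosh a}·sinh a, where K_{iν}(y) = ∫₀^∞ e^{−y cosh t} cos(νt) dt. -/

import Mathlib

/-!
Integrating by parts in `t` turns `ν K_{iν}(y)` into `y ∫₀^∞ e^{-y cosh t} sinh t sin(νt) dt`,
which is `y` times the Fourier sine transform of the odd function `f(t) = e^{-y cosh t} sinh t`.
The left-hand side is therefore `y` times the sine inversion integral of `f` at `a`, i.e. `y f(a)`.
Sine inversion is Fourier inversion for odd functions; it applies because `f`, `f'`, `f''` are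
integrable, so that `(1 + ξ²) 𝓕 f` is bounded and `𝓕 f` is integrable.
-/

open Real MeasureTheory Set Filter Topology FourierTransform

theorem Function.Odd.integral_eq_zero {g : ℝ → ℝ} (hg : g.Odd) : ∫ x, g x = 0 := by
  have h := integral_neg_eq_self g volume
  simp only [hg.eq, integral_neg] at h
  linarith

theorem Function.Even.integral_eq_two_mul_integral_Ioi {g : ℝ → ℝ} (hg : g.Even) :
    ∫ x, g x = 2 * ∫ x in Ioi 0, g x := by
  rw [← integral_comp_abs]
  congr 1 with x
  rcases le_or_gt 0 x with hx | hx
  · rw [abs_of_nonneg hx]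
  · rw [abs_of_neg hx, hg]

noncomputable def sineTransform (f : ℝ → ℝ) (ν : ℝ) : ℝ := ∫ t in Ioi 0, f t * sin (ν * t)

theorem sineTransform_neg (f : ℝ → ℝ) (ν : ℝ) : sineTransform f (-ν) = -sineTransform f ν := by
  simp only [sineTransform, ← integral_neg, neg_mul, sin_neg, mul_neg]

theorem Function.Odd.integral_mul_sin {f : ℝ → ℝ} (hf : f.Odd) (ν : ℝ) :
    ∫ t, f t * sin (ν * t) = 2 * sineTransform f ν :=
  Function.Even.integral_eq_two_mul_integral_Ioi fun t => by
    rw [hf, mul_neg, sin_neg, neg_mul_neg]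

theorem Function.Odd.integral_mul_cos {f : ℝ → ℝ} (hf : f.Odd) (ν : ℝ) :
    ∫ t, f t * cos (ν * t) = 0 :=
  Function.Odd.integral_eq_zero fun t => by rw [hf, mul_neg, cos_neg, neg_mul]

theorem fourierChar_smul_ofReal (x z : ℝ) :
    𝐞 x • (z : ℂ) = ↑(z * cos (2 * π * x)) + ↑(z * sin (2 * π * x)) * Complex.I := by
  rw [Circle.smul_def, Real.fourierChar_apply, Complex.exp_mul_I]
  push_cast
  ring

theorem re_fourierChar_smul_ofReal_mul_I (x z : ℝ) :
    (𝐞 x • ((z : ℂ) * Complex.I)).re = -(z * sin (2 * π * x)) := by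
  rw [Circle.smul_def, Real.fourierChar_apply, Complex.exp_mul_I, ← Complex.ofReal_cos,
    ← Complex.ofReal_sin]
  simp only [smul_eq_mul, Complex.mul_re, Complex.mul_im, Complex.add_re, Complex.add_im,
    Complex.ofReal_re, Complex.ofReal_im, Complex.I_re, Complex.I_im]
  ring

theorem Function.Odd.fourier_ofReal {f : ℝ → ℝ} (hf : f.Odd) (hi : Integrable f) (ξ : ℝ) :
    𝓕 (fun t => (f t : ℂ)) ξ = ↑(-(2 * sineTransform f (2 * π * ξ))) * Complex.I := by
  have hcos : Integrable fun t => f t * cos (2 * π * ξ * t) :=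
    hi.mul_bdd (by fun_prop) (ae_of_all _ fun t => abs_cos_le_one _)
  have hsin : Integrable fun t => f t * sin (2 * π * ξ * t) :=
    hi.mul_bdd (by fun_prop) (ae_of_all _ fun t => abs_sin_le_one _)
  have hpt : ∀ t, 𝐞 (-(t * ξ)) • (f t : ℂ)
      = ↑(f t * cos (2 * π * ξ * t)) - ↑(f t * sin (2 * π * ξ * t)) * Complex.I := by
    intro t
    rw [fourierChar_smul_ofReal, show 2 * π * -(t * ξ) = -(2 * π * ξ * t) by ring, cos_neg,
      sin_neg]
    push_cast
    ring
  simp_rw [Real.fourier_real_eq, hpt]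
  rw [integral_sub hcos.ofReal (hsin.ofReal.mul_const _), integral_mul_const,
    integral_complex_ofReal, integral_complex_ofReal, hf.integral_mul_cos, hf.integral_mul_sin]
  push_cast
  ring

theorem integrable_fourier_of_hasDerivAt_of_hasDerivAt {E : Type*} [NormedAddCommGroup E]
    [NormedSpace ℂ E] {f f' f'' : ℝ → E} (hf : ∀ x, HasDerivAt f (f' x) x)
    (hf' : ∀ x, HasDerivAt f' (f'' x) x) (hi : Integrable f) (hi' : Integrable f')
    (hi'' : Integrable f'') :
    Integrable (𝓕 f) := by
  have hd : deriv f = f' := funext fun x => (hf x).deriv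
  have hd' : deriv f' = f'' := funext fun x => (hf' x).deriv
  have h1 := Real.fourier_deriv hi (fun x => (hf x).differentiableAt) (hd ▸ hi')
  have h2 := Real.fourier_deriv hi' (fun x => (hf' x).differentiableAt) (hd' ▸ hi'')
  rw [hd] at h1
  rw [hd'] at h2
  have hbound : ∀ ξ : ℝ, (1 + ξ ^ 2) * ‖𝓕 f ξ‖ ≤ (∫ x, ‖f x‖) + ∫ x, ‖f'' x‖ := by
    intro ξ
    have hA : ‖𝓕 f ξ‖ ≤ ∫ x, ‖f x‖ :=
      VectorFourier.norm_fourierIntegral_le_integral_norm _ _ _ _ _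
    have hB : ‖𝓕 f'' ξ‖ ≤ ∫ x, ‖f'' x‖ :=
      VectorFourier.norm_fourierIntegral_le_integral_norm _ _ _ _ _
    have hξ : ‖(2 * π * Complex.I * ξ : ℂ)‖ = 2 * π * |ξ| := by simp [abs_of_pos pi_pos]
    rw [h2, h1, norm_smul, norm_smul, hξ, ← mul_assoc, ← sq] at hB
    have hsq : ξ ^ 2 ≤ (2 * π * |ξ|) ^ 2 := by
      rw [mul_pow, sq_abs]
      exact le_mul_of_one_le_left (sq_nonneg ξ) (by nlinarith [pi_gt_three])
    nlinarith [mul_le_mul_of_nonneg_right hsq (norm_nonneg (𝓕 f ξ))]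
  refine (integrable_inv_one_add_sq.const_mul ((∫ x, ‖f x‖) + ∫ x, ‖f'' x‖)).mono'
    (VectorFourier.fourierIntegral_continuous continuous_fourierChar continuous_inner
      hi).aestronglyMeasurable (ae_of_all _ fun ξ => ?_)
  rw [← div_eq_mul_inv, le_div_iff₀ (by positivity), mul_comm]
  exact hbound ξ

theorem sineTransform_inversion {f f' f'' : ℝ → ℝ} (hf_odd : f.Odd)
    (hf : ∀ t, HasDerivAt f (f' t) t) (hf' : ∀ t, HasDerivAt f' (f'' t) t)
    (hi : Integrable f) (hi' : Integrable f') (hi'' : Integrable f'') (a : ℝ) :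
    (2 / π) * ∫ ν in Ioi 0, sineTransform f ν * sin (ν * a) = f a := by
  set F : ℝ → ℂ := fun t => (f t : ℂ)
  set g : ℝ → ℝ := fun ν => sineTransform f ν * sin (ν * a)
  have hint : Integrable (𝓕 F) :=
    integrable_fourier_of_hasDerivAt_of_hasDerivAt (fun t => (hf t).ofReal_comp)
      (fun t => (hf' t).ofReal_comp) hi.ofReal hi'.ofReal hi''.ofReal
  have hinv : 𝓕⁻ (𝓕 F) a = F a :=
    hi.ofReal.fourierInv_fourier_eq hint (hf a).continuousAt.ofReal
  have hpt : ∀ ξ : ℝ, (𝐞 (inner ℝ ξ a) • 𝓕 F ξ).re = 2 * g (2 * π * ξ) := by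
    intro ξ
    rw [hf_odd.fourier_ofReal hi, re_fourierChar_smul_ofReal_mul_I]
    simp only [g, RCLike.inner_apply, conj_trivial]
    ring_nf
  have hg_even : g.Even := fun ν => by
    simp only [g, sineTransform_neg, neg_mul, sin_neg, mul_neg, neg_neg]
  calc (2 / π) * ∫ ν in Ioi 0, g ν
      = 2 * ∫ ξ in Ioi 0, 2 * g (2 * π * ξ) := by
        rw [integral_const_mul, integral_comp_mul_left_Ioi g 0 (by positivity), mul_zero,
          smul_eq_mul]
        field_simp
    _ = ∫ ξ, 2 * g (2 * π * ξ) :=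
        (Function.Even.integral_eq_two_mul_integral_Ioi fun ξ => by
          rw [mul_neg, hg_even]).symm
    _ = (𝓕⁻ (𝓕 F) a).re := by
        have hint' : Integrable fun ξ => 𝐞 (inner ℝ ξ a) • 𝓕 F ξ := by
          simpa [inner_neg_right] using (Real.fourierIntegral_convergent_iff (-a)).2 hint
        rw [fourierInv_eq, ← RCLike.re_to_complex, ← integral_re hint']
        simp only [RCLike.re_to_complex, hpt]
    _ = f a := by rw [hinv]; rfl

theorem abs_le_abs_sinh (t : ℝ) : |t| ≤ |sinh t| := by
  rw [abs_sinh]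
  exact self_le_sinh_iff.2 (abs_nonneg t)

theorem abs_sinh_le_cosh (t : ℝ) : |sinh t| ≤ cosh t := by
  rw [abs_sinh, ← cosh_abs]
  exact (sinh_lt_cosh _).le

theorem abs_le_cosh (t : ℝ) : |t| ≤ cosh t :=
  (abs_le_abs_sinh t).trans (abs_sinh_le_cosh t)

theorem one_add_sq_le_cosh_sq (t : ℝ) : 1 + t ^ 2 ≤ cosh t ^ 2 := by
  have h := pow_le_pow_left₀ (abs_nonneg t) (abs_le_abs_sinh t) 2
  rw [sq_abs, sq_abs] at h
  linarith [cosh_sq' t]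

theorem cosh_pow_mul_exp_neg_mul_cosh_le {y : ℝ} (hy : 0 < y) (n : ℕ) (t : ℝ) :
    cosh t ^ n * exp (-y * cosh t) ≤ n.factorial / y ^ n := by
  have h := pow_div_factorial_le_exp (y * cosh t) (by positivity) n
  rw [div_le_iff₀ (by positivity), mul_pow] at h
  rw [le_div_iff₀ (by positivity), neg_mul, exp_neg, ← div_eq_mul_inv,
    div_mul_eq_mul_div, div_le_iff₀ (exp_pos _)]
  linarith

theorem integrable_cosh_pow_mul_exp_neg_mul_cosh {y : ℝ} (hy : 0 < y) (n : ℕ) :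
    Integrable fun t => cosh t ^ n * exp (-y * cosh t) := by
  refine (integrable_inv_one_add_sq.const_mul ((n + 2).factorial / y ^ (n + 2))).mono'
    (by fun_prop) (ae_of_all _ fun t => ?_)
  rw [norm_of_nonneg (by positivity), ← div_eq_mul_inv, le_div_iff₀ (by positivity)]
  calc cosh t ^ n * exp (-y * cosh t) * (1 + t ^ 2)
      ≤ cosh t ^ n * exp (-y * cosh t) * cosh t ^ 2 := by
        gcongr
        exact one_add_sq_le_cosh_sq t
    _ = cosh t ^ (n + 2) * exp (-y * cosh t) := by ring
    _ ≤ (n + 2).factorial / y ^ (n + 2) := cosh_pow_mul_exp_neg_mul_cosh_le hy _ t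

theorem integrable_of_abs_le_cosh_pow_mul_exp {y : ℝ} (hy : 0 < y) {g : ℝ → ℝ}
    (hg : Continuous g) (C : ℝ) (n : ℕ)
    (hb : ∀ t, |g t| ≤ C * (cosh t ^ n * exp (-y * cosh t))) : Integrable g :=
  ((integrable_cosh_pow_mul_exp_neg_mul_cosh hy n).const_mul C).mono' hg.aestronglyMeasurable
    (ae_of_all _ hb)

theorem tendsto_exp_neg_mul_cosh_atTop {y : ℝ} (hy : 0 < y) :
    Tendsto (fun t => exp (-y * cosh t)) atTop (𝓝 0) := by
  have hcosh : Tendsto cosh atTop atTop :=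
    tendsto_atTop_mono (fun t => (le_abs_self t).trans (abs_le_cosh t)) tendsto_id
  simpa only [neg_mul, Function.comp_def] using
    tendsto_exp_atBot.comp (tendsto_neg_atTop_atBot.comp (hcosh.const_mul_atTop hy))

theorem hasDerivAt_exp_neg_mul_cosh (y t : ℝ) :
    HasDerivAt (fun t => exp (-y * cosh t)) (exp (-y * cosh t) * (-y * sinh t)) t :=
  ((hasDerivAt_cosh t).const_mul (-y)).exp

noncomputable def expNegCoshMulSinh (y t : ℝ) : ℝ := exp (-y * cosh t) * sinh t

theorem expNegCoshMulSinh_odd (y : ℝ) : (expNegCoshMulSinh y).Odd := fun t => by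
  simp only [expNegCoshMulSinh, cosh_neg, sinh_neg, mul_neg]

theorem hasDerivAt_expNegCoshMulSinh (y t : ℝ) :
    HasDerivAt (expNegCoshMulSinh y) (exp (-y * cosh t) * (cosh t - y * sinh t ^ 2)) t :=
  ((hasDerivAt_exp_neg_mul_cosh y t).mul (hasDerivAt_sinh t)).congr_deriv (by ring)

theorem hasDerivAt_exp_neg_mul_cosh_mul_cosh_sub (y t : ℝ) :
    HasDerivAt (fun t => exp (-y * cosh t) * (cosh t - y * sinh t ^ 2))
      (exp (-y * cosh t) * sinh t * (1 - 3 * y * cosh t + y ^ 2 * sinh t ^ 2)) t :=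
  have h : HasDerivAt (fun t => cosh t - y * sinh t ^ 2) (sinh t - y * (2 * sinh t * cosh t)) t :=
    (hasDerivAt_cosh t).sub ((hasDerivAt_sinh t).pow 2 |>.const_mul y |>.congr_deriv (by ring))
  ((hasDerivAt_exp_neg_mul_cosh y t).mul h).congr_deriv (by ring)

theorem integrable_expNegCoshMulSinh {y : ℝ} (hy : 0 < y) :
    Integrable (expNegCoshMulSinh y) := by
  refine integrable_of_abs_le_cosh_pow_mul_exp hy (by unfold expNegCoshMulSinh; fun_prop) 1 1
    fun t => ?_
  rw [expNegCoshMulSinh, abs_mul, abs_of_pos (exp_pos _)]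
  nlinarith [abs_sinh_le_cosh t, exp_pos (-y * cosh t)]

theorem integrable_exp_neg_mul_cosh_mul_cosh_sub {y : ℝ} (hy : 0 < y) :
    Integrable fun t => exp (-y * cosh t) * (cosh t - y * sinh t ^ 2) := by
  refine integrable_of_abs_le_cosh_pow_mul_exp hy (by fun_prop) (1 + y) 2 fun t => ?_
  have hc := one_le_cosh t
  have hs : sinh t ^ 2 ≤ cosh t ^ 2 := by linarith [cosh_sq t]
  have hb : |cosh t - y * sinh t ^ 2| ≤ (1 + y) * cosh t ^ 2 := by
    rw [abs_le]
    constructor <;> nlinarith [sq_nonneg (sinh t)]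
  rw [abs_mul, abs_of_pos (exp_pos _)]
  nlinarith [exp_pos (-y * cosh t)]

theorem integrable_exp_neg_mul_cosh_mul_sinh_mul {y : ℝ} (hy : 0 < y) :
    Integrable fun t =>
      exp (-y * cosh t) * sinh t * (1 - 3 * y * cosh t + y ^ 2 * sinh t ^ 2) := by
  refine integrable_of_abs_le_cosh_pow_mul_exp hy (by fun_prop) (1 + 3 * y + y ^ 2) 3
    fun t => ?_
  have hc := one_le_cosh t
  have hs := abs_sinh_le_cosh t
  have hs2 : sinh t ^ 2 ≤ cosh t ^ 2 := by linarith [cosh_sq t]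
  have hb : |1 - 3 * y * cosh t + y ^ 2 * sinh t ^ 2| ≤ (1 + 3 * y + y ^ 2) * cosh t ^ 2 := by
    rw [abs_le]
    have hc2 : cosh t ≤ cosh t ^ 2 := by nlinarith
    constructor <;> nlinarith [mul_le_mul_of_nonneg_left hc2 hy.le, sq_nonneg (y * sinh t)]
  rw [abs_mul, abs_mul, abs_of_pos (exp_pos _), mul_assoc]
  calc exp (-y * cosh t) * (|sinh t| * |1 - 3 * y * cosh t + y ^ 2 * sinh t ^ 2|)
      ≤ exp (-y * cosh t) * (cosh t * ((1 + 3 * y + y ^ 2) * cosh t ^ 2)) := by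
        gcongr
    _ = (1 + 3 * y + y ^ 2) * (cosh t ^ 3 * exp (-y * cosh t)) := by ring

theorem mul_integral_exp_neg_mul_cosh_mul_cos {y : ℝ} (hy : 0 < y) (ν : ℝ) :
    ν * ∫ t in Ioi 0, exp (-y * cosh t) * cos (ν * t) =
      y * sineTransform (expNegCoshMulSinh y) ν := by
  have hderiv : ∀ t ∈ Ici (0 : ℝ), HasDerivAt (fun t => exp (-y * cosh t) * sin (ν * t))
      (ν * (exp (-y * cosh t) * cos (ν * t)) - y * (expNegCoshMulSinh y t * sin (ν * t))) t :=
    fun t _ => by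
      have h : HasDerivAt (fun t => sin (ν * t)) (cos (ν * t) * ν) t :=
        (hasDerivAt_sin (ν * t)).comp t
          ((hasDerivAt_id t).const_mul ν |>.congr_deriv (mul_one ν))
      exact ((hasDerivAt_exp_neg_mul_cosh y t).mul h).congr_deriv
        (by unfold expNegCoshMulSinh; ring)
  have hcos : Integrable fun t => exp (-y * cosh t) * cos (ν * t) :=
    integrable_of_abs_le_cosh_pow_mul_exp hy (by fun_prop) 1 0 fun t => by
      rw [abs_mul, abs_of_pos (exp_pos _), pow_zero, one_mul, one_mul]
      exact mul_le_of_le_one_right (exp_pos _).le (abs_cos_le_one _)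
  have hsin : Integrable fun t => expNegCoshMulSinh y t * sin (ν * t) :=
    (integrable_expNegCoshMulSinh hy).mul_bdd (by fun_prop)
      (ae_of_all _ fun t => abs_sin_le_one _)
  have hlim : Tendsto (fun t => exp (-y * cosh t) * sin (ν * t)) atTop (𝓝 0) :=
    squeeze_zero_norm (a := fun t => exp (-y * cosh t)) (fun t => by
      rw [norm_mul, norm_of_nonneg (exp_pos _).le]
      exact mul_le_of_le_one_right (exp_pos _).le (abs_sin_le_one _))
      (tendsto_exp_neg_mul_cosh_atTop hy)
  have h := integral_Ioi_of_hasDerivAt_of_tendsto' hderiv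
    ((hcos.const_mul ν).sub (hsin.const_mul y)).integrableOn hlim
  rw [integral_sub (hcos.const_mul ν).integrableOn (hsin.const_mul y).integrableOn,
    integral_const_mul, integral_const_mul] at h
  simp only [mul_zero, sin_zero, sub_zero] at h
  rw [sineTransform]
  linarith

theorem stmt_10_general (y a : ℝ) (hy : 0 < y) :
    (2 / π) * ∫ ν in Set.Ioi (0:ℝ), ν * Real.sin (a * ν) *
        ∫ t in Set.Ioi (0:ℝ), Real.exp (-y * Real.cosh t) * Real.cos (ν * t) =
      y * Real.exp (-y * Real.cosh a) * Real.sinh a := by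
  have hparts : ∀ ν : ℝ, ν * sin (a * ν) * ∫ t in Ioi 0, exp (-y * cosh t) * cos (ν * t) =
      y * (sineTransform (expNegCoshMulSinh y) ν * sin (ν * a)) := fun ν => by
    rw [mul_right_comm, mul_integral_exp_neg_mul_cosh_mul_cos hy, mul_comm a]
    ring
  simp_rw [hparts]
  rw [integral_const_mul, mul_left_comm, sineTransform_inversion (expNegCoshMulSinh_odd y)
    (hasDerivAt_expNegCoshMulSinh y) (hasDerivAt_exp_neg_mul_cosh_mul_cosh_sub y)
    (integrable_expNegCoshMulSinh hy) (integrable_exp_neg_mul_cosh_mul_cosh_sub hy)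
    (integrable_exp_neg_mul_cosh_mul_sinh_mul hy), expNegCoshMulSinh, mul_assoc]

theorem stmt_10 (y a : ℝ) (hy : 0 < y) (ha : |a| < π / 2) :
    (2 / π) * ∫ ν in Set.Ioi (0:ℝ), ν * Real.sin (a * ν) *
        ∫ t in Set.Ioi (0:ℝ), Real.exp (-y * Real.cosh t) * Real.cos (ν * t) =
      y * Real.exp (-y * Real.cosh a) * Real.sinh a :=
  stmt_10_general y a hy
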